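/- Let h > 0, let k̄ be a complex number with Re k̄ > 0, and let f be a continuous function on [0,h]. If w is a C² function on [0,h] satisfying w'' - k̄² w = f with Neumann boundary conditions w'(0) = w'(h) = 0, then w(0) = -∫₀ʰ f(y) ρ(y) dy, where ρ(y) = cosh(k̄(h-y)) / (k̄ sinh(k̄ h)). -/

import Mathlib

open MeasureTheory Complex

/-- Lemma 6.1: Green's representation of the boundary value `w 0` for the
Neumann problem `w'' - k̄² w = f` on `[0, h]`. -/
theorem stmt_0 (h : ℝ) (hh : 0 < h) (kbar : ℂ) (hk : 0 < kbar.re)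
    (f w : ℝ → ℂ) (hf : ContinuousOn f (Set.Icc 0 h))
    (hw : ContDiff ℝ 2 w)
    (hode : ∀ y ∈ Set.Icc (0:ℝ) h, deriv (deriv w) y - kbar ^ 2 * w y = f y)
    (hb0 : deriv w 0 = 0) (hbh : deriv w h = 0) :
    w 0 = -∫ y in (0:ℝ)..h,
        f y * (Complex.cosh (kbar * (h - y)) / (kbar * Complex.sinh (kbar * h))) := by
  have hk0 : kbar ≠ 0 := by
    intro h0; rw [h0] at hk; simp at hk
  have hsre : (kbar * (h:ℂ)).re = kbar.re * h := by simp [Complex.mul_re]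
  have hsinh0 : Complex.sinh (kbar * (h:ℂ)) ≠ 0 := by
    intro h0
    have : Complex.sin (kbar * (h:ℂ) * Complex.I) = 0 := by
      rw [Complex.sin_mul_I, h0, zero_mul]
    rw [Complex.sin_eq_zero_iff] at this
    obtain ⟨k, hkk⟩ := this
    have := congrArg Complex.im hkk
    have him := congrArg Complex.im hkk
    simp [Complex.mul_im, Complex.mul_re] at him
    rcases him with h1 | h1
    · exact absurd h1 hk.ne'
    · exact absurd h1 hh.ne'
  have hS0 : kbar * Complex.sinh (kbar * (h:ℂ)) ≠ 0 := mul_ne_zero hk0 hsinh0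
  set S : ℂ := kbar * Complex.sinh (kbar * (h:ℂ)) with hS
  -- derivatives of rho and rho'
  have hinner : ∀ z : ℂ, HasDerivAt (fun z : ℂ => kbar * ((h:ℂ) - z)) (-kbar) z := by
    intro z
    have := ((hasDerivAt_id z).const_sub (h:ℂ)).const_mul kbar
    simpa using this
  have hrho : ∀ y : ℝ, HasDerivAt (fun t : ℝ => Complex.cosh (kbar * ((h:ℂ) - t)) / S)
      (Complex.sinh (kbar * ((h:ℂ) - y)) * (-kbar) / S) y := by
    intro y
    exact (((Complex.hasDerivAt_cosh _).comp _ (hinner (y:ℂ))).div_const S).comp_ofReal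
  have hrho' : ∀ y : ℝ, HasDerivAt (fun t : ℝ => Complex.sinh (kbar * ((h:ℂ) - t)) * (-kbar) / S)
      (Complex.cosh (kbar * ((h:ℂ) - y)) * (-kbar) * (-kbar) / S) y := by
    intro y
    exact ((((Complex.hasDerivAt_sinh _).comp _ (hinner (y:ℂ))).mul_const (-kbar)).div_const S).comp_ofReal
  -- derivatives of w
  have hw1 : Differentiable ℝ w := hw.differentiable (by norm_num)
  have hw2 : Differentiable ℝ (deriv w) := by
    have h2 : ContDiff ℝ (1 + 1) w := by norm_num; exact hw
    exact ((contDiff_succ_iff_deriv.mp h2).2.2).differentiable (by norm_num)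
  set G : ℝ → ℂ := fun t => deriv w t * (Complex.cosh (kbar * ((h:ℂ) - t)) / S)
      - w t * (Complex.sinh (kbar * ((h:ℂ) - t)) * (-kbar) / S) with hG
  have hderivG : ∀ y ∈ Set.uIcc (0:ℝ) h, HasDerivAt G
      (f y * (Complex.cosh (kbar * ((h:ℂ) - y)) / S)) y := by
    intro y hy
    rw [Set.uIcc_of_le hh.le] at hy
    have h1 : HasDerivAt G
        (deriv (deriv w) y * (Complex.cosh (kbar * ((h:ℂ) - y)) / S)
          + deriv w y * (Complex.sinh (kbar * ((h:ℂ) - y)) * (-kbar) / S)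
          - (deriv w y * (Complex.sinh (kbar * ((h:ℂ) - y)) * (-kbar) / S)
            + w y * (Complex.cosh (kbar * ((h:ℂ) - y)) * (-kbar) * (-kbar) / S))) y :=
      (((hw2 y).hasDerivAt.mul (hrho y)).sub ((hw1 y).hasDerivAt.mul (hrho' y)))
    convert h1 using 1
    rw [← hode y hy]
    field_simp
    ring
  have hcont : IntervalIntegrable
      (fun y => f y * (Complex.cosh (kbar * ((h:ℝ) - y)) / S)) volume 0 h := by
    apply ContinuousOn.intervalIntegrable
    rw [Set.uIcc_of_le hh.le]
    apply hf.mul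
    apply Continuous.continuousOn
    exact (Complex.continuous_cosh.comp (by continuity)).div_const S
  have hint := intervalIntegral.integral_eq_sub_of_hasDerivAt hderivG hcont
  have hGh : G h = 0 := by
    simp [hG, hbh]
  have hG0 : G 0 = w 0 := by
    have he : kbar * ((h:ℂ) - ((0:ℝ):ℂ)) = kbar * (h:ℂ) := by norm_num
    simp only [hG, hb0, zero_mul, he, zero_sub, hS]
    have hq : Complex.sinh (kbar * (h:ℂ)) * -kbar / (kbar * Complex.sinh (kbar * (h:ℂ))) = -1 := by
      field_simp
    rw [hq]
    ring
  rw [hGh, hG0, zero_sub] at hint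
  rw [hint, neg_neg]
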